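/- (Lower queries produce red-iff-lower zoo) If every query in a set Q of s-pider queries is lower (i.e., of the form f^I_j with lower index j nonempty), then an ideal s-pider in zoo(Q) is red if and only if it is lower (has a nonempty lower index). In particular the red full s-pider never appears. -/

import Mathlib

/-!  A general framework for relational structures, conjunctive queries,
tuple generating dependencies (TGDs), and the chase, following
Gogacz–Marcinkowski, "The Hunt for a Red Spider: Conjunctive Query
Determinacy Is Undecidable". -/

namespace CQD

/-- A relational structure over relation symbols `R` and domain `D`:
a set of atoms, each a relation symbol together with its tuple of arguments. -/
abbrev Struc (R D : Type*) := Set (R × List D)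

/-- Map a structure along a function on domain elements. -/
def smap {R D E : Type*} (h : D → E) (S : Struc R D) : Struc R E :=
  (fun a => (a.1, a.2.map h)) '' S

/-- Terms over constants `K`: variables (natural numbers) or constants. -/
abbrev Term (K : Type*) := ℕ ⊕ K

/-- A conjunction of atoms over variables and constants from `K`. -/
abbrev Conj (R K : Type*) := Struc R (Term K)

/-- `h` is a homomorphism from the conjunction `Φ` into the structure `S`,
where the constants are interpreted by `ι`. -/
def IsHom {R K D : Type*} (Φ : Conj R K) (S : Struc R D) (ι : K → D) (h : ℕ → D) : Prop :=
  ∀ a ∈ Φ, (a.1, a.2.map (Sum.elim h ι)) ∈ S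

/-- A tuple-generating dependency `∀ x̄ ȳ (body(x̄,ȳ) → ∃ z̄ head(z̄,ȳ))`;
`frontier` is the set of universally quantified variables `ȳ` shared by body and head. -/
structure TGD (R K : Type*) where
  body : Conj R K
  head : Conj R K
  frontier : Set ℕ

/-- `Φ` holds in `S` at the tuple `b` (given on the frontier variables `fr`). -/
def holdsAt {R K D : Type*} (Φ : Conj R K) (fr : Set ℕ) (S : Struc R D) (ι : K → D)
    (b : ℕ → D) : Prop :=
  ∃ h : ℕ → D, IsHom Φ S ι h ∧ ∀ y ∈ fr, h y = b y

/-- A structure satisfies a TGD in the usual first-order sense. -/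
def TGD.sat {R K D : Type*} (T : TGD R K) (S : Struc R D) (ι : K → D) : Prop :=
  ∀ b, holdsAt T.body T.frontier S ι b → holdsAt T.head T.frontier S ι b

/-- The `ToDo` set: pairs `⟨b̄, T⟩` whose body is satisfied at `b̄` but which still
lack a witness for the head. -/
def ToDo {R K D : Type*} (𝒯 : Set (TGD R K)) (S : Struc R D) (ι : K → D) :
    Set ((ℕ → D) × TGD R K) :=
  {p | p.2 ∈ 𝒯 ∧ holdsAt p.2.body p.2.frontier S ι p.1 ∧
       ¬ holdsAt p.2.head p.2.frontier S ι p.1}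

/-- The active domain of a structure. -/
def adom {R D : Type*} (S : Struc R D) : Set D := {d | ∃ a ∈ S, d ∈ a.2}

/-- `S'` is the result of one application `T(S, b̄)` of the TGD `T` to `S` at tuple `b̄`:
a fresh copy of the head is added, its frontier variables identified with `b̄`. -/
def IsStep {R K D : Type*} (T : TGD R K) (S : Struc R D) (ι : K → D) (b : ℕ → D)
    (S' : Struc R D) : Prop :=
  ∃ g : ℕ → D,
    (∀ y ∈ T.frontier, g y = b y) ∧
    (∀ x ∉ T.frontier, g x ∉ adom S ∧ g x ∉ Set.range ι) ∧
    Set.InjOn g {x | x ∉ T.frontier} ∧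
    S' = S ∪ smap (Sum.elim g ι) T.head

/-- Union of the stages strictly below `i`. -/
def partUnion {X : Type*} (seq : Ordinal.{0} → Set X) (i : Ordinal.{0}) : Set X :=
  ⋃ j ∈ Set.Iio i, seq j

/-- A fair chase sequence for the set `𝒯` of TGDs starting from `D0`. -/
structure ChaseSeq {R K D : Type*} (𝒯 : Set (TGD R K)) (D0 : Struc R D) (ι : K → D) where
  len : Ordinal.{0}
  pos : 0 < len
  seq : Ordinal.{0} → Struc R D
  init : seq 0 = D0
  step : ∀ i, 0 < i → i < len →
    ∃ p ∈ ToDo 𝒯 (partUnion seq i) ι, IsStep p.2 (partUnion seq i) ι p.1 (seq i)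
  fair : ∀ i < len, ∀ p ∈ ToDo 𝒯 (partUnion seq i) ι,
    ∃ k, i < k ∧ k ≤ len ∧ p ∉ ToDo 𝒯 (partUnion seq k) ι

/-- The result of a chase sequence: the union of all its stages. -/
def ChaseSeq.result {R K D : Type*} {𝒯 : Set (TGD R K)} {D0 : Struc R D} {ι : K → D}
    (C : ChaseSeq 𝒯 D0 ι) : Struc R D := partUnion C.seq C.len

/-- `S` is (the result of) a chase of `𝒯` over `D0`. -/
def IsChase {R K D : Type*} (𝒯 : Set (TGD R K)) (D0 : Struc R D) (ι : K → D)
    (S : Struc R D) : Prop :=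
  ∃ C : ChaseSeq 𝒯 D0 ι, C.result = S

/-- A conjunctive query: a conjunction of atoms with designated free variables. -/
structure CQ (R K : Type*) where
  body : Conj R K
  free : Set ℕ

/-- Colored (green/red) relation symbols: `true` = green, `false` = red. -/
abbrev CRel (R : Type*) := R × Bool

/-- Paint all atoms of a conjunction with the color `c`. -/
def paint {R K : Type*} (c : Bool) (Φ : Conj R K) : Conj (CRel R) K :=
  (fun a => ((a.1, c), a.2)) '' Φ

/-- The view `Q(S)` defined by a query with body `Φ` and free variables `fr`
over the structure `S`: the set of satisfying assignments of the free variables. -/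
def eval {R K D : Type*} (Φ : Conj R K) (fr : Set ℕ) (S : Struc R D) (ι : K → D) :
    Set (ℕ → D) :=
  {b | holdsAt Φ fr S ι b}

/-- The green-red TGD generated by `Q`, from color `c` to the opposite color
(`tgdGR true Q` is `Q^{G→R}`, `tgdGR false Q` is `Q^{R→G}`). -/
def tgdGR {R K : Type*} (c : Bool) (Q : CQ R K) : TGD (CRel R) K :=
  ⟨paint c Q.body, paint (!c) Q.body, Q.free⟩

/-- The set `𝒯_𝒬` of green-red TGDs generated by a set of conjunctive queries. -/
def TQ {R K : Type*} (𝒬 : Set (CQ R K)) : Set (TGD (CRel R) K) :=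
  {T | ∃ Q ∈ 𝒬, ∃ c : Bool, T = tgdGR c Q}

end CQD

/-! The s-pider signature, ideal s-piders, s-pider queries and the s-pider chase. -/

namespace Spider

open CQD

/-- Relation symbols of the s-pider signature: a ternary `H`, thighs `T_i, T^i`
and calves `C_i, C^i` (all binary). -/
inductive SpRel (s : ℕ) : Type
  | H : SpRel s
  | Tlo : Fin s → SpRel s
  | Tup : Fin s → SpRel s
  | Clo : Fin s → SpRel s
  | Cup : Fin s → SpRel s

/-- Constants `c_i` (left) and `c^i` (right). -/
abbrev SpK (s : ℕ) := Fin s ⊕ Fin s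

abbrev SpTerm (s : ℕ) := CQD.Term (SpK s)

/-- The head variable `z`. -/
def vz (s : ℕ) : SpTerm s := Sum.inl 0
/-- The tail variable `z₁`. -/
def vtail (s : ℕ) : SpTerm s := Sum.inl 1
/-- The antenna variable `z₂`. -/
def vant (s : ℕ) : SpTerm s := Sum.inl 2
/-- The lower knee variable `x_i`. -/
def vx (s : ℕ) (i : Fin s) : SpTerm s := Sum.inl (2 * (i : ℕ) + 3)
/-- The upper knee variable `y_i`. -/
def vy (s : ℕ) (i : Fin s) : SpTerm s := Sum.inl (2 * (i : ℕ) + 4)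
/-- The constant `c_i`. -/
def clo (s : ℕ) (i : Fin s) : SpTerm s := Sum.inr (Sum.inl i)
/-- The constant `c^i`. -/
def cup (s : ℕ) (i : Fin s) : SpTerm s := Sum.inr (Sum.inr i)

/-- The conjunction `Φ_s`:
`H(z,z₁,z₂) ∧ ⋀ᵢ T_i(z,x_i) ∧ T^i(z,y_i) ∧ C_i(x_i,c_i) ∧ C^i(y_i,c^i)`. -/
def Phi (s : ℕ) : Conj (SpRel s) (SpK s) :=
  {(SpRel.H, [vz s, vtail s, vant s])} ∪
  ⋃ i : Fin s,
    ({(SpRel.Tlo i, [vz s, vx s i]), (SpRel.Tup i, [vz s, vy s i]),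
      (SpRel.Clo i, [vx s i, clo s i]), (SpRel.Cup i, [vy s i, cup s i])} :
      Set (SpRel s × List (SpTerm s)))

/-- The ideal s-pider of color `c` with (empty-or-singleton) upper lame index `I`
and lower lame index `J`: the `c`-colored `Φ_s` with the calf atoms indexed by `I`
and `J` recolored to the opposite color. -/
def idealSp (s : ℕ) (c : Bool) (I J : Option (Fin s)) :
    Struc (CRel (SpRel s)) (SpTerm s) :=
  {((SpRel.H, c), [vz s, vtail s, vant s])} ∪
  ⋃ i : Fin s,
    ({((SpRel.Tlo i, c), [vz s, vx s i]), ((SpRel.Tup i, c), [vz s, vy s i]),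
      ((SpRel.Clo i, if J = some i then !c else c), [vx s i, clo s i]),
      ((SpRel.Cup i, if I = some i then !c else c), [vy s i, cup s i])} :
      Set (CRel (SpRel s) × List (SpTerm s)))

/-- The s-pider query `f^I_J`: the conjunction `Φ_s` with the calves indexed by
`I` (upper) and `J` (lower) removed; its free variables are the corresponding knees. -/
def spq (s : ℕ) (I J : Option (Fin s)) : CQ (SpRel s) (SpK s) where
  body := Phi s \
    ({a | ∃ i ∈ I, a = (SpRel.Cup i, [vy s i, cup s i])} ∪
     {a | ∃ j ∈ J, a = (SpRel.Clo j, [vx s j, clo s j])})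
  free := {n | (∃ i ∈ I, n = 2 * (i : ℕ) + 4) ∨ (∃ j ∈ J, n = 2 * (j : ℕ) + 3)}

/-- The set `𝔽_s` of s-pider queries (1-lame and 2-lame). -/
def SpiderQs (s : ℕ) : Set (CQ (SpRel s) (SpK s)) :=
  {q | ∃ I J : Option (Fin s), (I.isSome ∨ J.isSome) ∧ q = spq s I J}

/-- The interpretation of the constants in the canonical domain. -/
def spι (s : ℕ) : SpK s → SpTerm s := Sum.inr

/-- `S` is (the result of) a chase of the green-red TGDs generated by `𝒬`,
starting from the ideal green full s-pider. -/
def SpChase (s : ℕ) (𝒬 : Set (CQ (SpRel s) (SpK s)))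
    (S : Struc (CRel (SpRel s)) (SpTerm s)) : Prop :=
  IsChase (TQ 𝒬) (idealSp s true none none) (spι s) S

/-- `x ⊆ y` for empty-or-singleton sets coded as `Option`. -/
def osub {s : ℕ} (x y : Option (Fin s)) : Prop := ∀ i : Fin s, x = some i → y = some i

/-- `y ∖ x` for empty-or-singleton sets coded as `Option` (assuming `x ⊆ y`). -/
def odiff {s : ℕ} (y x : Option (Fin s)) : Option (Fin s) :=
  match x with | none => y | some _ => none

/-- A copy of the canonical structure `T0` occurs inside `S` (an injective
renaming of vertices which fixes the constants). -/
def CopyIn {s : ℕ} {V : Type*} (T0 : Struc (CRel (SpRel s)) (SpTerm s))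
    (ι : SpK s → V) (S : Struc (CRel (SpRel s)) V) : Prop :=
  ∃ m : SpTerm s → V, Set.InjOn m (adom T0) ∧ (∀ k, m (Sum.inr k) = ι k) ∧
    smap m T0 ⊆ S

/-- `𝒮` is an isomorphic copy of the canonical structure `T0`. -/
def IsCopy {s : ℕ} {V : Type*} (T0 : Struc (CRel (SpRel s)) (SpTerm s))
    (ι : SpK s → V) (𝒮 : Struc (CRel (SpRel s)) V) : Prop :=
  ∃ m : SpTerm s → V, Set.InjOn m (adom T0) ∧ (∀ k, m (Sum.inr k) = ι k) ∧
    smap m T0 = 𝒮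

/-- Erase the colors of a colored structure. -/
def dalt {s : ℕ} {V : Type*} (S : Struc (CRel (SpRel s)) V) : Struc (SpRel s) V :=
  (fun a => (a.1.1, a.2)) '' S

/-- `𝒮` is a real s-pider in `S`: a minimal substructure whose daltonisation
satisfies `Φ_s`. -/
def RealSpider {s : ℕ} {V : Type*} (S 𝒮 : Struc (CRel (SpRel s)) V)
    (ι : SpK s → V) : Prop :=
  𝒮 ⊆ S ∧ (∃ h, IsHom (Phi s) (dalt 𝒮) ι h) ∧
    ∀ 𝒮' ⊂ 𝒮, ¬ ∃ h, IsHom (Phi s) (dalt 𝒮') ι h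

/-- Abstract ideal s-piders: a color and the two lame indices.  `𝔸_s`. -/
abbrev ISp (s : ℕ) := Bool × Option (Fin s) × Option (Fin s)

/-- The canonical structure of an abstract ideal s-pider. -/
def idealOf (s : ℕ) (p : ISp s) : Struc (CRel (SpRel s)) (SpTerm s) :=
  idealSp s p.1 p.2.1 p.2.2

/-- The zoo: all ideal s-piders isomorphic to some real s-pider in `S`. -/
def zoo {s : ℕ} (S : Struc (CRel (SpRel s)) (SpTerm s)) : Set (ISp s) :=
  {p | ∃ 𝒮, RealSpider S 𝒮 (spι s) ∧ IsCopy (idealOf s p) (spι s) 𝒮}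

/-- Closure of a set of abstract ideal s-piders under the partial functions
`f^I_J` for `(I,J) ∈ F`. -/
def ClosedUnder {s : ℕ} (F : Set (Option (Fin s) × Option (Fin s)))
    (Z : Set (ISp s)) : Prop :=
  ∀ IJ ∈ F, ∀ p ∈ Z, osub p.2.1 IJ.1 → osub p.2.2 IJ.2 →
    (!p.1, odiff IJ.1 p.2.1, odiff IJ.2 p.2.2) ∈ Z

end Spider

/-!
Chase steps only add atoms, so the stages of a chase form a directed family, and it suffices to
find a property of structures that survives single steps and directed unions. The property used
(`Spider.SpiderInv`) is: each head has a unique lower `i`-thigh, each knee a single lower `i`-calf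
colour, a green head has no red lower calf, and a red head has a green lower calf. A step by a
lower query `f^I_{j₀}` glues a spider of the opposite colour onto the `j₀`-th lower knee of a
match, all its other vertices being fresh; the crux is that this knee already carries a green
calf. A red spider in the zoo therefore has a green lower calf, i.e. is lower, and a green lower
spider would have a red lower calf.
-/

namespace CQD

variable {R K D : Type*}

theorem partUnion_eq_sUnion_image (seq : Ordinal.{0} → Set D) (i : Ordinal.{0}) :
    partUnion seq i = ⋃₀ (seq '' Set.Iio i) :=
  (Set.sUnion_image _ _).symm

namespace ChaseSeq

variable {𝒯 : Set (TGD R K)} {D0 : Struc R D} {ι : K → D} (C : ChaseSeq 𝒯 D0 ι)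

theorem partUnion_subset_seq {k : Ordinal.{0}} (hk0 : 0 < k) (hk : k < C.len) :
    partUnion C.seq k ⊆ C.seq k := by
  obtain ⟨p, -, g, -, -, -, hstep⟩ := C.step k hk0 hk
  exact hstep ▸ Set.subset_union_left

theorem seq_mono {j k : Ordinal.{0}} (hjk : j ≤ k) (hk : k < C.len) : C.seq j ⊆ C.seq k := by
  rcases hjk.lt_or_eq with hjk | rfl
  · exact (Set.subset_biUnion_of_mem (u := C.seq) hjk).trans
      (C.partUnion_subset_seq (zero_le.trans_lt hjk) hk)
  · exact le_rfl

theorem directedOn_image_seq {i : Ordinal.{0}} (hi : i ≤ C.len) :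
    DirectedOn (· ⊆ ·) (C.seq '' Set.Iio i) := by
  rw [directedOn_image]
  intro j hj k hk
  have hmax : max j k < i := max_lt hj hk
  exact ⟨max j k, Set.mem_Iio.2 hmax, C.seq_mono (le_max_left j k) (hmax.trans_le hi),
    C.seq_mono (le_max_right j k) (hmax.trans_le hi)⟩

theorem result_induction {P : Struc R D → Prop} (h0 : P D0)
    (hunion : ∀ 𝒞 : Set (Struc R D), 𝒞.Nonempty → DirectedOn (· ⊆ ·) 𝒞 →
      (∀ S ∈ 𝒞, P S) → P (⋃₀ 𝒞))
    (hstep : ∀ S S' p, p ∈ ToDo 𝒯 S ι → IsStep p.2 S ι p.1 S' → P S → P S') :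
    P C.result := by
  have hpartUnion :
      ∀ i, 0 < i → i ≤ C.len → (∀ j < i, P (C.seq j)) → P (partUnion C.seq i) :=
    fun i hi0 hi hP => partUnion_eq_sUnion_image C.seq i ▸
      hunion _ ⟨_, Set.mem_image_of_mem _ (Set.mem_Iio.2 hi0)⟩ (C.directedOn_image_seq hi)
        (Set.forall_mem_image.2 hP)
  have hseq : ∀ j < C.len, P (C.seq j) := by
    intro j
    induction j using WellFoundedLT.induction with
    | ind j ih =>
      intro hj
      rcases eq_zero_or_pos j with rfl | hj0
      · rw [C.init]; exact h0
      · obtain ⟨p, hp, hstep'⟩ := C.step j hj0 hj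
        exact hstep _ _ p hp hstep'
          (hpartUnion j hj0 hj.le fun k hk => ih k hk (hk.trans hj))
  exact hpartUnion C.len C.pos le_rfl hseq

end ChaseSeq

end CQD

namespace Spider

open CQD

variable {s : ℕ}

def headAtom (c : Bool) (v t a : SpTerm s) : CRel (SpRel s) × List (SpTerm s) :=
  ((SpRel.H, c), [v, t, a])

def lowerThigh (i : Fin s) (c : Bool) (v x : SpTerm s) : CRel (SpRel s) × List (SpTerm s) :=
  ((SpRel.Tlo i, c), [v, x])

def lowerCalf (i : Fin s) (c : Bool) (x : SpTerm s) : CRel (SpRel s) × List (SpTerm s) :=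
  ((SpRel.Clo i, c), [x, clo s i])

structure SpiderInv (S : Struc (CRel (SpRel s)) (SpTerm s)) : Prop where
  thigh_unique {i e e' v x x'} : lowerThigh i e v x ∈ S → lowerThigh i e' v x' ∈ S → x = x'
  calf_unique {i e e' x} : lowerCalf i e x ∈ S → lowerCalf i e' x ∈ S → e = e'
  exists_calf {i e v x} : lowerThigh i e v x ∈ S → ∃ e', lowerCalf i e' x ∈ S
  green_no_red_calf {v t a i x} : headAtom true v t a ∈ S → lowerThigh i true v x ∈ S →
    lowerCalf i false x ∉ S
  red_has_green_calf {v t a} : headAtom false v t a ∈ S →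
    ∃ i x, lowerThigh i false v x ∈ S ∧ lowerCalf i true x ∈ S

theorem mem_Phi {a : SpRel s × List (SpTerm s)} :
    a ∈ Phi s ↔ a = (SpRel.H, [vz s, vtail s, vant s]) ∨
      ∃ i : Fin s, a = (SpRel.Tlo i, [vz s, vx s i]) ∨ a = (SpRel.Tup i, [vz s, vy s i]) ∨
        a = (SpRel.Clo i, [vx s i, clo s i]) ∨ a = (SpRel.Cup i, [vy s i, cup s i]) := by
  simp [Phi]

theorem mem_idealSp {c : Bool} {I J : Option (Fin s)} {a : CRel (SpRel s) × List (SpTerm s)} :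
    a ∈ idealSp s c I J ↔ a = headAtom c (vz s) (vtail s) (vant s) ∨
      ∃ i : Fin s, a = lowerThigh i c (vz s) (vx s i) ∨
        a = ((SpRel.Tup i, c), [vz s, vy s i]) ∨
        a = lowerCalf i (if J = some i then !c else c) (vx s i) ∨
        a = ((SpRel.Cup i, if I = some i then !c else c), [vy s i, cup s i]) := by
  simp [idealSp, headAtom, lowerThigh, lowerCalf]

theorem spiderInv_idealSp_green_full : SpiderInv (idealSp s true none none) where
  thigh_unique h h' := by
    rcases mem_idealSp.1 h with h | ⟨_, h | h | h | h⟩ <;>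
      rcases mem_idealSp.1 h' with h' | ⟨_, h' | h' | h' | h'⟩ <;>
      simp_all [headAtom, lowerThigh, lowerCalf]
  calf_unique h h' := by
    rcases mem_idealSp.1 h with h | ⟨_, h | h | h | h⟩ <;>
      rcases mem_idealSp.1 h' with h' | ⟨_, h' | h' | h' | h'⟩ <;>
      simp_all [headAtom, lowerThigh, lowerCalf]
  exists_calf {i _ _ x} h := by
    have hx : x = vx s i := by
      rcases mem_idealSp.1 h with h | ⟨_, h | h | h | h⟩ <;>
        simp_all [headAtom, lowerThigh, lowerCalf]
    exact ⟨true, mem_idealSp.2 (Or.inr ⟨i, by simp [hx]⟩)⟩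
  green_no_red_calf _ _ h := by
    rcases mem_idealSp.1 h with h | ⟨_, h | h | h | h⟩ <;>
      simp_all [headAtom, lowerThigh, lowerCalf]
  red_has_green_calf h := by
    exfalso
    rcases mem_idealSp.1 h with h | ⟨_, h | h | h | h⟩ <;>
      simp_all [headAtom, lowerThigh, lowerCalf]

theorem SpiderInv.sUnion {𝒞 : Set (Struc (CRel (SpRel s)) (SpTerm s))} (hne : 𝒞.Nonempty)
    (hdir : DirectedOn (· ⊆ ·) 𝒞) (h : ∀ S ∈ 𝒞, SpiderInv S) :
    SpiderInv (⋃₀ 𝒞) := by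
  have common : ∀ a b c, a ∈ ⋃₀ 𝒞 → b ∈ ⋃₀ 𝒞 → c ∈ ⋃₀ 𝒞 →
      ∃ S ∈ 𝒞, SpiderInv S ∧ a ∈ S ∧ b ∈ S ∧ c ∈ S := by
    intro a b c ha hb hc
    obtain ⟨S, hS, habc⟩ := hdir.exists_mem_subset_of_finite_of_subset_sUnion hne
      (Set.toFinite {a, b, c}) (by simp [Set.insert_subset_iff, ha, hb, hc])
    exact ⟨S, hS, h S hS, habc (by simp), habc (by simp), habc (by simp)⟩
  refine ⟨fun h₁ h₂ => ?_, fun h₁ h₂ => ?_, fun h₁ => ?_, fun h₁ h₂ h₃ => ?_,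
    fun h₁ => ?_⟩
  · obtain ⟨S, -, hS, h₁, h₂, -⟩ := common _ _ _ h₁ h₂ h₂
    exact hS.thigh_unique h₁ h₂
  · obtain ⟨S, -, hS, h₁, h₂, -⟩ := common _ _ _ h₁ h₂ h₂
    exact hS.calf_unique h₁ h₂
  · obtain ⟨S, hS, h₁⟩ := Set.mem_sUnion.1 h₁
    obtain ⟨e, he⟩ := (h S hS).exists_calf h₁
    exact ⟨e, Set.subset_sUnion_of_mem hS he⟩
  · obtain ⟨S, -, hS, h₁, h₂, h₃⟩ := common _ _ _ h₁ h₂ h₃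
    exact hS.green_no_red_calf h₁ h₂ h₃
  · obtain ⟨S, hS, h₁⟩ := Set.mem_sUnion.1 h₁
    obtain ⟨i, x, hT, hC⟩ := (h S hS).red_has_green_calf h₁
    exact ⟨i, x, Set.subset_sUnion_of_mem hS hT, Set.subset_sUnion_of_mem hS hC⟩

section Adom

variable {S : Struc (CRel (SpRel s)) (SpTerm s)}

theorem headAtom_fst_mem_adom {c : Bool} {v t a : SpTerm s} (h : headAtom c v t a ∈ S) :
    v ∈ adom S :=
  ⟨_, h, by simp [headAtom]⟩

theorem lowerThigh_fst_mem_adom {i : Fin s} {c : Bool} {v x : SpTerm s}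
    (h : lowerThigh i c v x ∈ S) : v ∈ adom S :=
  ⟨_, h, by simp [lowerThigh]⟩

theorem lowerThigh_snd_mem_adom {i : Fin s} {c : Bool} {v x : SpTerm s}
    (h : lowerThigh i c v x ∈ S) : x ∈ adom S :=
  ⟨_, h, by simp [lowerThigh]⟩

theorem lowerCalf_fst_mem_adom {i : Fin s} {c : Bool} {x : SpTerm s}
    (h : lowerCalf i c x ∈ S) : x ∈ adom S :=
  ⟨_, h, by simp [lowerCalf]⟩

end Adom

section LowerQuery

variable {I : Option (Fin s)} {j₀ : Fin s}

theorem zero_notMem_free_spq : 0 ∉ (spq s I (some j₀)).free := by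
  simp [spq]

theorem lowerKnee_mem_free_spq_iff {k : Fin s} :
    2 * (k : ℕ) + 3 ∈ (spq s I (some j₀)).free ↔ k = j₀ := by
  simp only [spq, Set.mem_ofPred_eq, Option.mem_def, Option.some.injEq, exists_eq_left']
  constructor
  · rintro (⟨i, _, h⟩ | h)
    · omega
    · exact Fin.ext (by omega)
  · rintro rfl
    exact Or.inr rfl

theorem head_mem_body_spq : (SpRel.H, [vz s, vtail s, vant s]) ∈ (spq s I (some j₀)).body :=
  ⟨mem_Phi.2 (Or.inl rfl), by simp⟩

theorem lowerThigh_mem_body_spq (k : Fin s) :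
    (SpRel.Tlo k, [vz s, vx s k]) ∈ (spq s I (some j₀)).body :=
  ⟨mem_Phi.2 (Or.inr ⟨k, Or.inl rfl⟩), by simp⟩

theorem lowerCalf_mem_body_spq {k : Fin s} (hk : k ≠ j₀) :
    (SpRel.Clo k, [vx s k, clo s k]) ∈ (spq s I (some j₀)).body :=
  ⟨mem_Phi.2 (Or.inr ⟨k, Or.inr (Or.inr (Or.inl rfl))⟩), by simp [hk]⟩

/-- The atoms added by a chase step for `f^I_{j₀}`: its body painted `c`, placed by `g`. -/
def bodyCopy (c : Bool) (I : Option (Fin s)) (j₀ : Fin s) (g : ℕ → SpTerm s) :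
    Struc (CRel (SpRel s)) (SpTerm s) :=
  smap (Sum.elim g (spι s)) (paint c (spq s I (some j₀)).body)

variable {c : Bool} {g : ℕ → SpTerm s}

theorem mem_bodyCopy {a : CRel (SpRel s) × List (SpTerm s)} :
    a ∈ bodyCopy c I j₀ g ↔
      ∃ b ∈ (spq s I (some j₀)).body, ((b.1, c), b.2.map (Sum.elim g (spι s))) = a := by
  rw [bodyCopy, smap, paint, Set.image_image]; rfl

theorem lowerThigh_mem_bodyCopy (k : Fin s) :
    lowerThigh k c (g 0) (g (2 * k + 3)) ∈ bodyCopy c I j₀ g :=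
  mem_bodyCopy.2 ⟨_, lowerThigh_mem_body_spq k, by simp [lowerThigh, vz, vx]⟩

theorem lowerCalf_mem_bodyCopy {k : Fin s} (hk : k ≠ j₀) :
    lowerCalf k c (g (2 * k + 3)) ∈ bodyCopy c I j₀ g :=
  mem_bodyCopy.2 ⟨_, lowerCalf_mem_body_spq hk, by simp [lowerCalf, vx, clo, spι]⟩

theorem eq_of_headAtom_mem_bodyCopy {c' : Bool} {v t a : SpTerm s}
    (h : headAtom c' v t a ∈ bodyCopy c I j₀ g) : c' = c ∧ v = g 0 := by
  obtain ⟨b, hb, hba⟩ := mem_bodyCopy.1 h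
  rcases mem_Phi.1 hb.1 with rfl | ⟨i, rfl | rfl | rfl | rfl⟩ <;>
    simp_all [headAtom, vz, eq_comm]

theorem eq_of_lowerThigh_mem_bodyCopy {i : Fin s} {c' : Bool} {v x : SpTerm s}
    (h : lowerThigh i c' v x ∈ bodyCopy c I j₀ g) :
    c' = c ∧ v = g 0 ∧ x = g (2 * i + 3) := by
  obtain ⟨b, hb, hba⟩ := mem_bodyCopy.1 h
  rcases mem_Phi.1 hb.1 with rfl | ⟨i, rfl | rfl | rfl | rfl⟩ <;>
    simp_all [lowerThigh, vz, vx, eq_comm]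

theorem eq_of_lowerCalf_mem_bodyCopy {i : Fin s} {c' : Bool} {x : SpTerm s}
    (h : lowerCalf i c' x ∈ bodyCopy c I j₀ g) :
    c' = c ∧ i ≠ j₀ ∧ x = g (2 * i + 3) := by
  obtain ⟨b, hb, hba⟩ := mem_bodyCopy.1 h
  rcases mem_Phi.1 hb.1 with rfl | ⟨i, rfl | rfl | rfl | rfl⟩ <;>
    simp_all [spq, lowerCalf, vx, eq_comm]

/-- A chase step for the TGD `f^I_{j₀}` from colour `c` to `!c`, at a match `hh` of its body,
with the new copy of the body placed by `g`. -/
structure IsLowerStep (S S' : Struc (CRel (SpRel s)) (SpTerm s)) (c : Bool)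
    (I : Option (Fin s)) (j₀ : Fin s) (hh g : ℕ → SpTerm s) : Prop where
  hom : IsHom (paint c (spq s I (some j₀)).body) S (spι s) hh
  agree : ∀ y ∈ (spq s I (some j₀)).free, g y = hh y
  fresh : ∀ x ∉ (spq s I (some j₀)).free, g x ∉ adom S
  eq : S' = S ∪ bodyCopy (!c) I j₀ g

namespace IsLowerStep

variable {S S' : Struc (CRel (SpRel s)) (SpTerm s)} {hh : ℕ → SpTerm s}

theorem mem_of_mem_body (h : IsLowerStep S S' c I j₀ hh g)
    {b : SpRel s × List (SpTerm s)} (hb : b ∈ (spq s I (some j₀)).body) :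
    ((b.1, c), b.2.map (Sum.elim hh (spι s))) ∈ S :=
  h.hom _ ⟨b, hb, rfl⟩

theorem head_mem (h : IsLowerStep S S' c I j₀ hh g) :
    headAtom c (hh 0) (hh 1) (hh 2) ∈ S := by
  simpa [headAtom, vz, vtail, vant] using h.mem_of_mem_body head_mem_body_spq

theorem lowerThigh_mem (h : IsLowerStep S S' c I j₀ hh g) (k : Fin s) :
    lowerThigh k c (hh 0) (hh (2 * k + 3)) ∈ S := by
  simpa [lowerThigh, vz, vx] using h.mem_of_mem_body (lowerThigh_mem_body_spq k)

theorem lowerCalf_mem (h : IsLowerStep S S' c I j₀ hh g) {k : Fin s} (hk : k ≠ j₀) :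
    lowerCalf k c (hh (2 * k + 3)) ∈ S := by
  simpa [lowerCalf, vx, clo, spι] using h.mem_of_mem_body (lowerCalf_mem_body_spq hk)

theorem head_fresh (h : IsLowerStep S S' c I j₀ hh g) : g 0 ∉ adom S :=
  h.fresh 0 zero_notMem_free_spq

theorem knee_fresh (h : IsLowerStep S S' c I j₀ hh g) {k : Fin s} (hk : k ≠ j₀) :
    g (2 * k + 3) ∉ adom S :=
  h.fresh _ (mt lowerKnee_mem_free_spq_iff.1 hk)

theorem free_knee (h : IsLowerStep S S' c I j₀ hh g) : g (2 * j₀ + 3) = hh (2 * j₀ + 3) :=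
  h.agree _ (lowerKnee_mem_free_spq_iff.2 rfl)

/-- The free knee of a match of a lower query always carries a green calf: for a green match
because green heads have no red lower calves, for a red match because the green lower calf
that its head must have can only sit at the one knee where the match does not prescribe a red
calf. -/
theorem lowerCalf_green_free_knee (h : IsLowerStep S S' c I j₀ hh g) (hS : SpiderInv S) :
    lowerCalf j₀ true (g (2 * j₀ + 3)) ∈ S := by
  rw [h.free_knee]
  cases c with
  | true =>
    obtain ⟨e, he⟩ := hS.exists_calf (h.lowerThigh_mem j₀)
    cases e with
    | true => exact he
    | false => exact absurd he (hS.green_no_red_calf h.head_mem (h.lowerThigh_mem j₀))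
  | false =>
    obtain ⟨j, x, hT, hC⟩ := hS.red_has_green_calf h.head_mem
    obtain rfl := hS.thigh_unique hT (h.lowerThigh_mem j)
    by_cases hj : j = j₀
    · exact hj ▸ hC
    · exact absurd (hS.calf_unique (h.lowerCalf_mem hj) hC) Bool.false_ne_true

theorem thigh_unique (h : IsLowerStep S S' c I j₀ hh g) (hS : SpiderInv S)
    {i : Fin s} {e e' : Bool} {v x x' : SpTerm s}
    (h₁ : lowerThigh i e v x ∈ S') (h₂ : lowerThigh i e' v x' ∈ S') : x = x' := by
  rw [h.eq] at h₁ h₂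
  rcases h₁ with h₁ | h₁ <;> rcases h₂ with h₂ | h₂
  · exact hS.thigh_unique h₁ h₂
  · obtain ⟨-, rfl, -⟩ := eq_of_lowerThigh_mem_bodyCopy h₂
    exact absurd (lowerThigh_fst_mem_adom h₁) h.head_fresh
  · obtain ⟨-, rfl, -⟩ := eq_of_lowerThigh_mem_bodyCopy h₁
    exact absurd (lowerThigh_fst_mem_adom h₂) h.head_fresh
  · obtain ⟨-, -, rfl⟩ := eq_of_lowerThigh_mem_bodyCopy h₁
    exact (eq_of_lowerThigh_mem_bodyCopy h₂).2.2.symm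

theorem calf_unique (h : IsLowerStep S S' c I j₀ hh g) (hS : SpiderInv S)
    {i : Fin s} {e e' : Bool} {x : SpTerm s}
    (h₁ : lowerCalf i e x ∈ S') (h₂ : lowerCalf i e' x ∈ S') : e = e' := by
  rw [h.eq] at h₁ h₂
  rcases h₁ with h₁ | h₁ <;> rcases h₂ with h₂ | h₂
  · exact hS.calf_unique h₁ h₂
  · obtain ⟨-, hi, rfl⟩ := eq_of_lowerCalf_mem_bodyCopy h₂
    exact absurd (lowerCalf_fst_mem_adom h₁) (h.knee_fresh hi)
  · obtain ⟨-, hi, rfl⟩ := eq_of_lowerCalf_mem_bodyCopy h₁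
    exact absurd (lowerCalf_fst_mem_adom h₂) (h.knee_fresh hi)
  · obtain ⟨rfl, -, -⟩ := eq_of_lowerCalf_mem_bodyCopy h₁
    exact (eq_of_lowerCalf_mem_bodyCopy h₂).1.symm

theorem exists_calf (h : IsLowerStep S S' c I j₀ hh g) (hS : SpiderInv S)
    {i : Fin s} {e : Bool} {v x : SpTerm s}
    (hT : lowerThigh i e v x ∈ S') : ∃ e', lowerCalf i e' x ∈ S' := by
  rw [h.eq] at hT ⊢
  rcases hT with hT | hT
  · obtain ⟨e', hC⟩ := hS.exists_calf hT
    exact ⟨e', Or.inl hC⟩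
  · obtain ⟨-, -, rfl⟩ := eq_of_lowerThigh_mem_bodyCopy hT
    by_cases hi : i = j₀
    · subst hi
      exact ⟨true, Or.inl (h.lowerCalf_green_free_knee hS)⟩
    · exact ⟨!c, Or.inr (lowerCalf_mem_bodyCopy hi)⟩

theorem green_no_red_calf (h : IsLowerStep S S' c I j₀ hh g) (hS : SpiderInv S)
    {v t a : SpTerm s} {i : Fin s} {x : SpTerm s}
    (hH : headAtom true v t a ∈ S') (hT : lowerThigh i true v x ∈ S') :
    lowerCalf i false x ∉ S' := by
  rw [h.eq] at hH hT ⊢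
  rcases hH with hH | hH <;> rcases hT with hT | hT
  · rintro (hC | hC)
    · exact hS.green_no_red_calf hH hT hC
    · obtain ⟨-, hi, rfl⟩ := eq_of_lowerCalf_mem_bodyCopy hC
      exact h.knee_fresh hi (lowerThigh_snd_mem_adom hT)
  · obtain ⟨-, rfl, -⟩ := eq_of_lowerThigh_mem_bodyCopy hT
    exact absurd (headAtom_fst_mem_adom hH) h.head_fresh
  · obtain ⟨-, rfl⟩ := eq_of_headAtom_mem_bodyCopy hH
    exact absurd (lowerThigh_fst_mem_adom hT) h.head_fresh
  · obtain ⟨hc, -⟩ := eq_of_headAtom_mem_bodyCopy hH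
    obtain ⟨-, -, rfl⟩ := eq_of_lowerThigh_mem_bodyCopy hT
    rintro (hC | hC)
    · by_cases hi : i = j₀
      · subst hi
        exact absurd (hS.calf_unique hC (h.lowerCalf_green_free_knee hS))
          Bool.false_ne_true
      · exact h.knee_fresh hi (lowerCalf_fst_mem_adom hC)
    · exact absurd ((eq_of_lowerCalf_mem_bodyCopy hC).1.trans hc.symm) Bool.false_ne_true

theorem red_has_green_calf (h : IsLowerStep S S' c I j₀ hh g) (hS : SpiderInv S)
    {v t a : SpTerm s} (hH : headAtom false v t a ∈ S') :
    ∃ i x, lowerThigh i false v x ∈ S' ∧ lowerCalf i true x ∈ S' := by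
  rw [h.eq] at hH ⊢
  rcases hH with hH | hH
  · obtain ⟨i, x, hT, hC⟩ := hS.red_has_green_calf hH
    exact ⟨i, x, Or.inl hT, Or.inl hC⟩
  · obtain ⟨hc, rfl⟩ := eq_of_headAtom_mem_bodyCopy hH
    obtain rfl : c = true := by simpa using hc.symm
    exact ⟨j₀, _, Or.inr (lowerThigh_mem_bodyCopy j₀),
      Or.inl (h.lowerCalf_green_free_knee hS)⟩

theorem spiderInv (h : IsLowerStep S S' c I j₀ hh g) (hS : SpiderInv S) : SpiderInv S' :=
  ⟨h.thigh_unique hS, h.calf_unique hS, h.exists_calf hS, h.green_no_red_calf hS,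
    h.red_has_green_calf hS⟩

end IsLowerStep

end LowerQuery

theorem exists_isLowerStep {F : Set (Option (Fin s) × Option (Fin s))}
    (hF : ∀ IJ ∈ F, IJ.2.isSome) {S S' : Struc (CRel (SpRel s)) (SpTerm s)}
    {p : (ℕ → SpTerm s) × TGD (CRel (SpRel s)) (SpK s)}
    (hp : p ∈ ToDo (TQ ((fun IJ => spq s IJ.1 IJ.2) '' F)) S (spι s))
    (hstep : IsStep p.2 S (spι s) p.1 S') :
    ∃ c I j₀ hh g, IsLowerStep S S' c I j₀ hh g := by
  obtain ⟨b, T⟩ := p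
  obtain ⟨⟨_, ⟨⟨I, J⟩, hIJ, rfl⟩, c, rfl⟩, ⟨hh, hhom, hhb⟩, -⟩ := hp
  obtain ⟨j₀, rfl⟩ := Option.isSome_iff_exists.1 (hF _ hIJ)
  obtain ⟨g, hgb, hgfresh, -, rfl⟩ := hstep
  exact ⟨c, I, j₀, hh, g, hhom, fun y hy => (hgb y hy).trans (hhb y hy).symm,
    fun x hx => (hgfresh x hx).1, rfl⟩

theorem exists_embedding_of_mem_zoo {S : Struc (CRel (SpRel s)) (SpTerm s)} {p : ISp s}
    (hp : p ∈ zoo S) : ∃ m : SpTerm s → SpTerm s, (∀ k, m (clo s k) = clo s k) ∧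
      ∀ a ∈ idealOf s p, (a.1, a.2.map m) ∈ S := by
  obtain ⟨𝒮, ⟨h𝒮S, -⟩, m, -, hm, rfl⟩ := hp
  exact ⟨m, fun k => hm (Sum.inl k), fun a ha => h𝒮S ⟨a, ha, rfl⟩⟩

theorem SpiderInv.red_iff_lower {S : Struc (CRel (SpRel s)) (SpTerm s)} (hS : SpiderInv S)
    {p : ISp s} (hp : p ∈ zoo S) : p.1 = false ↔ p.2.2.isSome := by
  obtain ⟨c, I, J⟩ := p
  obtain ⟨m, hm, hmS⟩ := exists_embedding_of_mem_zoo hp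
  have hH : headAtom c (m (vz s)) (m (vtail s)) (m (vant s)) ∈ S := by
    simpa [headAtom] using hmS _ (mem_idealSp.2 (Or.inl rfl))
  have hT (k : Fin s) : lowerThigh k c (m (vz s)) (m (vx s k)) ∈ S := by
    simpa [lowerThigh] using hmS _ (mem_idealSp.2 (Or.inr ⟨k, Or.inl rfl⟩))
  have hC (k : Fin s) : lowerCalf k (if J = some k then !c else c) (m (vx s k)) ∈ S := by
    simpa [lowerCalf, hm] using
      hmS _ (mem_idealSp.2 (Or.inr ⟨k, Or.inr (Or.inr (Or.inl rfl))⟩))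
  change c = false ↔ J.isSome
  constructor
  · rintro rfl
    obtain ⟨j, x, hTj, hCj⟩ := hS.red_has_green_calf hH
    obtain rfl := hS.thigh_unique hTj (hT j)
    have hcolour := hS.calf_unique hCj (hC j)
    by_cases hJ : J = some j
    · simp [hJ]
    · simp [hJ] at hcolour
  · intro hJ
    obtain ⟨j, rfl⟩ := Option.isSome_iff_exists.1 hJ
    cases c
    · rfl
    · exact absurd (by simpa using hC j) (hS.green_no_red_calf hH (hT j))

end Spider

open CQD Spider in
/-- **Lower queries produce red-iff-lower zoo.**  If every s-pider
query `f^I_J`, `(I,J) ∈ F`, is lower (i.e. `J` is nonempty), then an ideal s-pider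
in the zoo of the chase is red iff it is lower.  In particular the red full s-pider
never appears. -/
theorem red_iff_lower (s : ℕ) (F : Set (Option (Fin s) × Option (Fin s)))
    (hF : ∀ IJ ∈ F, IJ.2.isSome)
    (S : Struc (CRel (SpRel s)) (SpTerm s))
    (hS : SpChase s ((fun IJ => spq s IJ.1 IJ.2) '' F) S) :
    (∀ p ∈ zoo S, p.1 = false ↔ p.2.2.isSome) ∧
    ((false, none, none) : ISp s) ∉ zoo S := by
  obtain ⟨C, rfl⟩ := hS
  have hInv : SpiderInv C.result :=
    C.result_induction spiderInv_idealSp_green_full (fun _ => SpiderInv.sUnion)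
      fun _ _ _ hp hstep hInv => by
        obtain ⟨_, _, _, _, _, h⟩ := exists_isLowerStep hF hp hstep
        exact h.spiderInv hInv
  refine ⟨fun p hp => hInv.red_iff_lower hp, fun hp => ?_⟩
  simpa using hInv.red_iff_lower hp
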